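/- Let U, W, K, X, Z be finite-valued random variables such that (i) K is independent of (U,W), and (ii) Z is conditionally independent of (K,U,W) given X. Then H(U | (W,Z)) ≥ H(U|W) + H(K) − H(K | (U,W,Z)) + I(X;Z | (U,W,K)) − I(X;Z). -/
import Mathlib


open scoped BigOperators

/-- The probability that a random variable `X` on the finite probability space `(Ω, μ)`
takes the value `a`. -/
noncomputable def prob {Ω α : Type} [Fintype Ω] [DecidableEq α]
    (μ : Ω → ℝ) (X : Ω → α) (a : α) : ℝ :=
  ∑ ω, if X ω = a then μ ω else 0

/-- Shannon entropy (natural logarithm) of `X`. -/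
noncomputable def entH {Ω α : Type} [Fintype Ω] [Fintype α] [DecidableEq α]
    (μ : Ω → ℝ) (X : Ω → α) : ℝ :=
  -∑ a, prob μ X a * Real.log (prob μ X a)

/-- Conditional entropy `H(X|Y) = H(X,Y) - H(Y)`. -/
noncomputable def condH {Ω α β : Type} [Fintype Ω] [Fintype α] [DecidableEq α]
    [Fintype β] [DecidableEq β] (μ : Ω → ℝ) (X : Ω → α) (Y : Ω → β) : ℝ :=
  entH μ (fun ω => (X ω, Y ω)) - entH μ Y

/-- Mutual information `I(X;Y) = H(X) + H(Y) - H(X,Y)`. -/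
noncomputable def MI {Ω α β : Type} [Fintype Ω] [Fintype α] [DecidableEq α]
    [Fintype β] [DecidableEq β] (μ : Ω → ℝ) (X : Ω → α) (Y : Ω → β) : ℝ :=
  entH μ X + entH μ Y - entH μ (fun ω => (X ω, Y ω))

/-- Conditional mutual information
`I(X;Y|Z) = H(X,Z) + H(Y,Z) - H(X,Y,Z) - H(Z)`. -/
noncomputable def condMI {Ω α β γ : Type} [Fintype Ω] [Fintype α] [DecidableEq α]
    [Fintype β] [DecidableEq β] [Fintype γ] [DecidableEq γ]
    (μ : Ω → ℝ) (X : Ω → α) (Y : Ω → β) (Z : Ω → γ) : ℝ :=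
  entH μ (fun ω => (X ω, Z ω)) + entH μ (fun ω => (Y ω, Z ω))
    - entH μ (fun ω => (X ω, Y ω, Z ω)) - entH μ Z

/-- `A` is conditionally independent of `B` given `C`:
`P(A=a, B=b | C=c) = P(A=a|C=c)·P(B=b|C=c)` whenever `P(C=c) > 0`
(stated multiplicatively). -/
def CondIndep {Ω α β γ : Type} [Fintype Ω] [DecidableEq α] [DecidableEq β] [DecidableEq γ]
    (μ : Ω → ℝ) (A : Ω → α) (B : Ω → β) (C : Ω → γ) : Prop :=
  ∀ a b c, 0 < prob μ C c →
    prob μ (fun ω => (A ω, B ω, C ω)) (a, b, c) * prob μ C c =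
      prob μ (fun ω => (A ω, C ω)) (a, c) * prob μ (fun ω => (B ω, C ω)) (b, c)

set_option synthInstance.maxSize 1000

section helpers
variable {Ω α β γ : Type} [Fintype Ω]

lemma prob_nonneg [DecidableEq α] (μ : Ω → ℝ) (hμ0 : ∀ ω, 0 ≤ μ ω) (X : Ω → α) (a : α) :
    0 ≤ prob μ X a := by
  refine Finset.sum_nonneg fun ω _ => ?_
  split <;> simp [hμ0 ω]

lemma prob_le [DecidableEq α] [DecidableEq β] (μ : Ω → ℝ) (hμ0 : ∀ ω, 0 ≤ μ ω)
    (X : Ω → α) (Y : Ω → β) (a : α) (b : β) (h : ∀ ω, X ω = a → Y ω = b) :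
    prob μ X a ≤ prob μ Y b := by
  refine Finset.sum_le_sum fun ω _ => ?_
  split_ifs with hx hy hy
  · exact le_refl _
  · exact absurd (h ω hx) hy
  · exact hμ0 ω
  · exact le_refl _

lemma sum_prob [Fintype α] [DecidableEq α] (μ : Ω → ℝ) (X : Ω → α) :
    ∑ a, prob μ X a = ∑ ω, μ ω := by
  unfold prob
  rw [Finset.sum_comm]
  refine Finset.sum_congr rfl fun ω _ => ?_
  simp

lemma marg_snd [Fintype β] [DecidableEq α] [DecidableEq β] (μ : Ω → ℝ)
    (A : Ω → α) (B : Ω → β) (a : α) :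
    ∑ b, prob μ (fun ω => (A ω, B ω)) (a, b) = prob μ A a := by
  unfold prob
  rw [Finset.sum_comm]
  refine Finset.sum_congr rfl fun ω _ => ?_
  by_cases h : A ω = a <;> simp [Prod.ext_iff, h]

lemma marg_fst [Fintype α] [DecidableEq α] [DecidableEq β] (μ : Ω → ℝ)
    (A : Ω → α) (B : Ω → β) (b : β) :
    ∑ a, prob μ (fun ω => (A ω, B ω)) (a, b) = prob μ B b := by
  unfold prob
  rw [Finset.sum_comm]
  refine Finset.sum_congr rfl fun ω _ => ?_
  by_cases h : B ω = b <;> simp [Prod.ext_iff, h]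

lemma marg_mid3 [Fintype β] [DecidableEq α] [DecidableEq β] [DecidableEq γ] (μ : Ω → ℝ)
    (A : Ω → α) (B : Ω → β) (C : Ω → γ) (a : α) (c : γ) :
    ∑ b, prob μ (fun ω => (A ω, B ω, C ω)) (a, b, c) = prob μ (fun ω => (A ω, C ω)) (a, c) := by
  unfold prob
  rw [Finset.sum_comm]
  refine Finset.sum_congr rfl fun ω _ => ?_
  by_cases h : A ω = a <;> by_cases h2 : C ω = c <;> simp [Prod.ext_iff, h, h2]

lemma marg_fst3 [Fintype α] [DecidableEq α] [DecidableEq β] [DecidableEq γ] (μ : Ω → ℝ)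
    (A : Ω → α) (B : Ω → β) (C : Ω → γ) (b : β) (c : γ) :
    ∑ a, prob μ (fun ω => (A ω, B ω, C ω)) (a, b, c) = prob μ (fun ω => (B ω, C ω)) (b, c) := by
  unfold prob
  rw [Finset.sum_comm]
  refine Finset.sum_congr rfl fun ω _ => ?_
  by_cases h : B ω = b <;> by_cases h2 : C ω = c <;> simp [Prod.ext_iff, h, h2]

lemma entH_map [Fintype α] [DecidableEq α] [Fintype β] [DecidableEq β]
    (μ : Ω → ℝ) (X : Ω → α) (Y : Ω → β) (e : α ≃ β) (h : ∀ ω, Y ω = e (X ω)) :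
    entH μ Y = entH μ X := by
  unfold entH
  rw [← Equiv.sum_comp e (fun b => prob μ Y b * Real.log (prob μ Y b))]
  congr 1
  refine Finset.sum_congr rfl fun a _ => ?_
  have : prob μ Y (e a) = prob μ X a := by
    unfold prob
    refine Finset.sum_congr rfl fun ω _ => ?_
    simp [h ω, Equiv.apply_eq_iff_eq]
  rw [this]

end helpers

section main
variable {Ω α β γ : Type} [Fintype Ω]

lemma entH_indep [Fintype α] [DecidableEq α] [Fintype β] [DecidableEq β]
    (μ : Ω → ℝ) (hμ1 : ∑ ω, μ ω = 1) (A : Ω → α) (B : Ω → β)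
    (h : ∀ a b, prob μ (fun ω => (A ω, B ω)) (a, b) = prob μ A a * prob μ B b) :
    entH μ (fun ω => (A ω, B ω)) = entH μ A + entH μ B := by
  unfold entH
  rw [Fintype.sum_prod_type]
  have key : ∀ a b,
      prob μ (fun ω => (A ω, B ω)) (a, b) * Real.log (prob μ (fun ω => (A ω, B ω)) (a, b))
        = prob μ A a * prob μ B b * Real.log (prob μ A a)
          + prob μ A a * prob μ B b * Real.log (prob μ B b) := by
    intro a b
    rw [h a b]
    by_cases ha : prob μ A a = 0
    · simp [ha]
    by_cases hb : prob μ B b = 0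
    · simp [hb]
    rw [Real.log_mul ha hb]; ring
  calc -∑ a, ∑ b, prob μ (fun ω => (A ω, B ω)) (a, b) * Real.log (prob μ (fun ω => (A ω, B ω)) (a, b))
      = -∑ a, ∑ b, (prob μ A a * prob μ B b * Real.log (prob μ A a)
          + prob μ A a * prob μ B b * Real.log (prob μ B b)) := by
        congr 1; exact Finset.sum_congr rfl fun a _ => Finset.sum_congr rfl fun b _ => key a b
    _ = -((∑ a, prob μ A a * Real.log (prob μ A a)) * (∑ b, prob μ B b)
          + (∑ a, prob μ A a) * (∑ b, prob μ B b * Real.log (prob μ B b))) := by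
        rw [Finset.sum_mul_sum, Finset.sum_mul_sum]
        rw [← Finset.sum_add_distrib]
        congr 1; refine Finset.sum_congr rfl fun a _ => ?_
        rw [← Finset.sum_add_distrib]
        refine Finset.sum_congr rfl fun b _ => ?_
        ring
    _ = -(∑ a, prob μ A a * Real.log (prob μ A a)) + -(∑ b, prob μ B b * Real.log (prob μ B b)) := by
        rw [sum_prob μ A, sum_prob μ B, hμ1]; ring

lemma entH_ci [Fintype α] [DecidableEq α] [Fintype β] [DecidableEq β] [Fintype γ] [DecidableEq γ]
    (μ : Ω → ℝ) (hμ0 : ∀ ω, 0 ≤ μ ω) (A : Ω → α) (B : Ω → β) (C : Ω → γ)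
    (h : ∀ a b c, 0 < prob μ C c →
      prob μ (fun ω => (A ω, B ω, C ω)) (a, b, c) * prob μ C c =
        prob μ (fun ω => (A ω, C ω)) (a, c) * prob μ (fun ω => (B ω, C ω)) (b, c)) :
    entH μ (fun ω => (A ω, B ω, C ω)) + entH μ C
      = entH μ (fun ω => (A ω, C ω)) + entH μ (fun ω => (B ω, C ω)) := by
  unfold entH
  simp only [Fintype.sum_prod_type]
  set p := fun a b c => prob μ (fun ω => (A ω, B ω, C ω)) (a, b, c) with hpdef
  set pac := fun a c => prob μ (fun ω => (A ω, C ω)) (a, c) with hacdef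
  set pbc := fun b c => prob μ (fun ω => (B ω, C ω)) (b, c) with hbcdef
  set pc := fun c => prob μ C c with hcdef
  have key : ∀ a b c, p a b c * Real.log (p a b c)
      = p a b c * Real.log (pac a c) + p a b c * Real.log (pbc b c)
        - p a b c * Real.log (pc c) := by
    intro a b c
    rcases eq_or_lt_of_le (prob_nonneg μ hμ0 (fun ω => (A ω, B ω, C ω)) (a, b, c)) with h0 | h0
    · simp only [hpdef, ← h0]; ring
    · have hc : 0 < pc c := lt_of_lt_of_le h0 (prob_le μ hμ0 _ C _ c
        (fun ω hω => by simpa using congrArg (fun t => t.2.2) hω))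
      have hac : 0 < pac a c := lt_of_lt_of_le h0 (prob_le μ hμ0 _ (fun ω => (A ω, C ω)) _ (a, c)
        (fun ω hω => by
          have h1 := congrArg (fun t => t.1) hω
          have h2 := congrArg (fun t => t.2.2) hω
          simp at h1 h2; simp [h1, h2]))
      have hbc : 0 < pbc b c := lt_of_lt_of_le h0 (prob_le μ hμ0 _ (fun ω => (B ω, C ω)) _ (b, c)
        (fun ω hω => by
          have h1 := congrArg (fun t => t.2.1) hω
          have h2 := congrArg (fun t => t.2.2) hω
          simp at h1 h2; simp [h1, h2]))
      have heq := h a b c hc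
      have hlog := congrArg Real.log heq
      rw [Real.log_mul (ne_of_gt h0) (ne_of_gt hc), Real.log_mul (ne_of_gt hac) (ne_of_gt hbc)]
        at hlog
      have : Real.log (p a b c) = Real.log (pac a c) + Real.log (pbc b c) - Real.log (pc c) := by
        linarith
      rw [this]; ring
  have hmid : ∀ a c, ∑ b, p a b c = pac a c := fun a c => marg_mid3 μ A B C a c
  have hfst3 : ∀ b c, ∑ a, p a b c = pbc b c := fun b c => marg_fst3 μ A B C b c
  have hfstp : ∀ c, ∑ a, pac a c = pc c := fun c => marg_fst μ A C c
  have hS : ∑ a, ∑ b, ∑ c, p a b c * Real.log (p a b c)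
      = (∑ a, ∑ b, ∑ c, p a b c * Real.log (pac a c))
        + (∑ a, ∑ b, ∑ c, p a b c * Real.log (pbc b c))
        - (∑ a, ∑ b, ∑ c, p a b c * Real.log (pc c)) := by
    simp only [← Finset.sum_add_distrib, ← Finset.sum_sub_distrib]
    exact Finset.sum_congr rfl fun a _ => Finset.sum_congr rfl fun b _ =>
      Finset.sum_congr rfl fun c _ => key a b c
  have hS1 : ∑ a, ∑ b, ∑ c, p a b c * Real.log (pac a c)
      = ∑ a, ∑ c, pac a c * Real.log (pac a c) := by
    refine Finset.sum_congr rfl fun a _ => ?_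
    rw [Finset.sum_comm]
    refine Finset.sum_congr rfl fun c _ => ?_
    rw [← Finset.sum_mul, hmid a c]
  have hS2 : ∑ a, ∑ b, ∑ c, p a b c * Real.log (pbc b c)
      = ∑ b, ∑ c, pbc b c * Real.log (pbc b c) := by
    rw [Finset.sum_comm]
    refine Finset.sum_congr rfl fun b _ => ?_
    rw [Finset.sum_comm]
    refine Finset.sum_congr rfl fun c _ => ?_
    rw [← Finset.sum_mul, hfst3 b c]
  have hS3 : ∑ a, ∑ b, ∑ c, p a b c * Real.log (pc c)
      = ∑ c, pc c * Real.log (pc c) := by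
    have step : ∀ a, ∑ b, ∑ c, p a b c * Real.log (pc c)
        = ∑ c, pac a c * Real.log (pc c) := by
      intro a
      rw [Finset.sum_comm]
      refine Finset.sum_congr rfl fun c _ => ?_
      rw [← Finset.sum_mul, hmid a c]
    simp only [step]
    rw [Finset.sum_comm]
    refine Finset.sum_congr rfl fun c _ => ?_
    rw [← Finset.sum_mul, hfstp c]
  linarith [hS, hS1, hS2, hS3]

lemma entH_pair_le [Fintype α] [DecidableEq α] [Fintype β] [DecidableEq β]
    (μ : Ω → ℝ) (hμ0 : ∀ ω, 0 ≤ μ ω) (hμ1 : ∑ ω, μ ω = 1) (A : Ω → α) (B : Ω → β) :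
    entH μ (fun ω => (A ω, B ω)) ≤ entH μ A + entH μ B := by
  unfold entH
  simp only [Fintype.sum_prod_type]
  set p := fun a b => prob μ (fun ω => (A ω, B ω)) (a, b) with hpdef
  set pA := fun a => prob μ A a with hAdef
  set pB := fun b => prob μ B b with hBdef
  have hmA : ∀ a, ∑ b, p a b = pA a := fun a => marg_snd μ A B a
  have hmB : ∀ b, ∑ a, p a b = pB b := fun b => marg_fst μ A B b
  have hA : ∑ a, ∑ b, p a b * Real.log (pA a) = ∑ a, pA a * Real.log (pA a) := by
    refine Finset.sum_congr rfl fun a _ => ?_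
    rw [← Finset.sum_mul, hmA a]
  have hB : ∑ a, ∑ b, p a b * Real.log (pB b) = ∑ b, pB b * Real.log (pB b) := by
    rw [Finset.sum_comm]
    refine Finset.sum_congr rfl fun b _ => ?_
    rw [← Finset.sum_mul, hmB b]
  have hsum1 : ∑ a, ∑ b, p a b = 1 := by
    rw [Finset.sum_congr rfl fun a _ => hmA a, hAdef]
    rw [sum_prob μ A, hμ1]
  have hsum2 : ∑ a, ∑ b, pA a * pB b = 1 := by
    rw [← Finset.sum_mul_sum]
    rw [hAdef, hBdef, sum_prob μ A, sum_prob μ B, hμ1]; norm_num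
  have term : ∀ a b, p a b * Real.log (pA a) + p a b * Real.log (pB b)
      - p a b * Real.log (p a b) ≤ pA a * pB b - p a b := by
    intro a b
    have hpn : 0 ≤ p a b := prob_nonneg μ hμ0 _ _
    have hpA : p a b ≤ pA a := prob_le μ hμ0 _ A _ a
      (fun ω hω => by simpa using congrArg (fun t => t.1) hω)
    have hpB : p a b ≤ pB b := prob_le μ hμ0 _ B _ b
      (fun ω hω => by simpa using congrArg (fun t => t.2) hω)
    have hAn : 0 ≤ pA a := le_trans hpn hpA
    have hBn : 0 ≤ pB b := le_trans hpn hpB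
    rcases eq_or_lt_of_le hpn with h0 | h0
    · rw [← h0]; simp; positivity
    · have hApos : 0 < pA a := lt_of_lt_of_le h0 hpA
      have hBpos : 0 < pB b := lt_of_lt_of_le h0 hpB
      have hq : 0 < pA a * pB b / p a b := by positivity
      have hlog := Real.log_le_sub_one_of_pos hq
      rw [Real.log_div (by positivity) (ne_of_gt h0),
        Real.log_mul (ne_of_gt hApos) (ne_of_gt hBpos)] at hlog
      have hmul := mul_le_mul_of_nonneg_left hlog (le_of_lt h0)
      have : p a b * (pA a * pB b / p a b) = pA a * pB b := by
        field_simp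
      nlinarith [hmul, this]
  have main : ∑ a, ∑ b, (p a b * Real.log (pA a) + p a b * Real.log (pB b)
      - p a b * Real.log (p a b)) ≤ ∑ a, ∑ b, (pA a * pB b - p a b) :=
    Finset.sum_le_sum fun a _ => Finset.sum_le_sum fun b _ => term a b
  have expand : ∑ a, ∑ b, (p a b * Real.log (pA a) + p a b * Real.log (pB b)
      - p a b * Real.log (p a b))
      = (∑ a, ∑ b, p a b * Real.log (pA a)) + (∑ a, ∑ b, p a b * Real.log (pB b))
        - (∑ a, ∑ b, p a b * Real.log (p a b)) := by
    simp only [← Finset.sum_add_distrib, ← Finset.sum_sub_distrib]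
  have expand2 : ∑ a, ∑ b, (pA a * pB b - p a b)
      = (∑ a, ∑ b, pA a * pB b) - (∑ a, ∑ b, p a b) := by
    simp only [← Finset.sum_sub_distrib]
  rw [expand, hA, hB] at main
  rw [expand2, hsum1, hsum2] at main
  linarith

end main

/-- Chain (genlowerbound) of the direct part: if `K` is independent of `(U,W)` and
`Z` is conditionally independent of `(K,U,W)` given `X`, then
`H(U|(W,Z)) ≥ H(U|W) + H(K) − H(K|(U,W,Z)) + I(X;Z|(U,W,K)) − I(X;Z)`. -/
theorem stmt8 {Ω 𝒰 𝒲 𝒦 𝒳 𝒵 : Type} [Fintype Ω]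
    [Fintype 𝒰] [DecidableEq 𝒰] [Nonempty 𝒰]
    [Fintype 𝒲] [DecidableEq 𝒲] [Nonempty 𝒲]
    [Fintype 𝒦] [DecidableEq 𝒦] [Nonempty 𝒦]
    [Fintype 𝒳] [DecidableEq 𝒳] [Nonempty 𝒳]
    [Fintype 𝒵] [DecidableEq 𝒵] [Nonempty 𝒵]
    (μ : Ω → ℝ) (hμ0 : ∀ ω, 0 ≤ μ ω) (hμ1 : ∑ ω, μ ω = 1)
    (U : Ω → 𝒰) (W : Ω → 𝒲) (K : Ω → 𝒦) (X : Ω → 𝒳) (Z : Ω → 𝒵)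
    (hKindep : ∀ (k : 𝒦) (u : 𝒰) (w : 𝒲),
      prob μ (fun ω => (K ω, U ω, W ω)) (k, u, w) =
        prob μ K k * prob μ (fun ω => (U ω, W ω)) (u, w))
    (hZci : CondIndep μ Z (fun ω => (K ω, U ω, W ω)) X) :
    condH μ U (fun ω => (W ω, Z ω)) ≥
      condH μ U W + entH μ K - condH μ K (fun ω => (U ω, W ω, Z ω))
        + condMI μ X Z (fun ω => (U ω, W ω, K ω)) - MI μ X Z := by
  -- E1: independence of K and (U,W)
  have hIndep : entH μ (fun ω => (K ω, U ω, W ω)) = entH μ K + entH μ (fun ω => (U ω, W ω)) :=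
    entH_indep μ hμ1 K (fun ω => (U ω, W ω))
      (fun k uw => by obtain ⟨u, w⟩ := uw; exact hKindep k u w)
  have hUWK : entH μ (fun ω => (U ω, W ω, K ω)) = entH μ (fun ω => (K ω, U ω, W ω)) :=
    entH_map μ _ _ ⟨fun t => (t.2.1, t.2.2, t.1), fun t => (t.2.2, t.1, t.2.1),
      fun t => rfl, fun t => rfl⟩ (fun ω => rfl)
  -- E2: relabeling of four-fold joint
  have hKUWZ : entH μ (fun ω => (K ω, U ω, W ω, Z ω)) = entH μ (fun ω => (Z ω, U ω, W ω, K ω)) :=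
    entH_map μ _ _ ⟨fun t => (t.2.2.2, t.2.1, t.2.2.1, t.1), fun t => (t.2.2.2, t.2.1, t.2.2.1, t.1),
      fun t => rfl, fun t => rfl⟩ (fun ω => rfl)
  -- E3: conditional independence
  have hCi : entH μ (fun ω => (Z ω, (K ω, U ω, W ω), X ω)) + entH μ X
      = entH μ (fun ω => (Z ω, X ω)) + entH μ (fun ω => ((K ω, U ω, W ω), X ω)) :=
    entH_ci μ hμ0 Z (fun ω => (K ω, U ω, W ω)) X hZci
  have hM1 : entH μ (fun ω => (X ω, Z ω, (U ω, W ω, K ω)))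
      = entH μ (fun ω => (Z ω, (K ω, U ω, W ω), X ω)) :=
    entH_map μ _ _ ⟨fun t => (t.2.2, t.1, (t.2.1.2.1, t.2.1.2.2, t.2.1.1)),
      fun s => (s.2.1, (s.2.2.2.2, s.2.2.1, s.2.2.2.1), s.1),
      fun t => rfl, fun t => rfl⟩ (fun ω => rfl)
  have hM2 : entH μ (fun ω => (X ω, Z ω)) = entH μ (fun ω => (Z ω, X ω)) :=
    entH_map μ _ _ (Equiv.prodComm 𝒵 𝒳) (fun ω => rfl)
  have hM3 : entH μ (fun ω => (X ω, (U ω, W ω, K ω)))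
      = entH μ (fun ω => ((K ω, U ω, W ω), X ω)) :=
    entH_map μ _ _ ⟨fun t => (t.2, (t.1.2.1, t.1.2.2, t.1.1)),
      fun s => ((s.2.2.2, s.2.1, s.2.2.1), s.1),
      fun t => rfl, fun t => rfl⟩ (fun ω => rfl)
  -- E4: subadditivity
  have hSub : entH μ (fun ω => (W ω, Z ω)) ≤ entH μ W + entH μ Z :=
    entH_pair_le μ hμ0 hμ1 W Z
  simp only [condH, condMI, MI, ge_iff_le]
  linarith [hIndep, hUWK, hKUWZ, hCi, hM1, hM2, hM3, hSub]
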